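/- arXiv:0909.3954 — 8 statements merged into one kernel-verified Lean document; each statement's English description precedes it below -/
import Mathlib

section
/- The set of nilpotent functions is closed under pointwise sum: if x, y : ℝ≥0 → ℝ satisfy |x(t) - x(0)|^k = o(t) and |y(t) - y(0)|^N = o(t) as t → 0⁺ for some k, N ∈ ℕ, then there exists M ∈ ℕ such that |(x+y)(t) - (x+y)(0)|^M = o(t) as t → 0⁺. -/
open Filter Topology Set

/-- `f t = o(t)` as `t → 0⁺`. -/
def oT (f : ℝ → ℝ) : Prop :=
  Filter.Tendsto (fun t => f t / t) (nhdsWithin 0 (Set.Ioi 0)) (nhds 0)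

/-!
If `‖u‖ ^ k = o(t)` as `t → 0⁺`, then eventually `‖u‖ ^ k < 1`, which forces `k ≠ 0` and `‖u‖ < 1`;
hence every higher power of `‖u‖` is `o(t)` as well. Raising both increments to `M = max k N`,
the bound `‖a + b‖ ^ M ≤ 2 ^ (M - 1) * (‖a‖ ^ M + ‖b‖ ^ M)` shows that the increment of `x + y`
is `o(t)` in power `M`.
-/

open Asymptotics

theorem oT_iff_isLittleO {f : ℝ → ℝ} : oT f ↔ f =o[𝓝[>] 0] id := by
  rw [oT, isLittleO_iff_tendsto']
  · exact Iff.rfl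
  · filter_upwards [self_mem_nhdsWithin] with t (ht : 0 < t) ht0
    exact absurd ht0 ht.ne'

namespace Asymptotics

variable {α E : Type*} [SeminormedAddCommGroup E] {l : Filter α} {g : α → ℝ}

theorem IsLittleO.norm_pow_of_le {f : α → E} {k M : ℕ} (hkM : k ≤ M)
    (hg : Tendsto g l (𝓝 0)) (hf : (fun a => ‖f a‖ ^ k) =o[l] g) :
    (fun a => ‖f a‖ ^ M) =o[l] g := by
  refine (IsBigO.of_bound' ?_).trans_isLittleO hf
  filter_upwards [hf.bound one_pos, hg.norm.eventually_lt_const (by norm_num : ‖(0 : ℝ)‖ < 1)]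
    with a hfa hga
  rw [one_mul, norm_pow, _root_.norm_norm] at hfa
  have hlt : ‖f a‖ ^ k < 1 := hfa.trans_lt hga
  have hk : k ≠ 0 := by
    rintro rfl
    exact lt_irrefl _ hlt
  have hle : ‖f a‖ ≤ 1 := ((pow_lt_one_iff_of_nonneg (norm_nonneg _) hk).1 hlt).le
  rw [norm_pow, norm_pow, _root_.norm_norm]
  exact pow_le_pow_of_le_one (norm_nonneg _) hle hkM

theorem IsLittleO.norm_add_pow {f₁ f₂ : α → E} {M : ℕ}
    (h₁ : (fun a => ‖f₁ a‖ ^ M) =o[l] g) (h₂ : (fun a => ‖f₂ a‖ ^ M) =o[l] g) :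
    (fun a => ‖f₁ a + f₂ a‖ ^ M) =o[l] g := by
  refine (IsBigO.of_bound (2 ^ (M - 1)) (Eventually.of_forall fun a => ?_)).trans_isLittleO
    (h₁.add h₂)
  rw [Real.norm_of_nonneg (by positivity), Real.norm_of_nonneg (by positivity)]
  calc ‖f₁ a + f₂ a‖ ^ M ≤ (‖f₁ a‖ + ‖f₂ a‖) ^ M :=
        pow_le_pow_left₀ (norm_nonneg _) (norm_add_le _ _) M
    _ ≤ 2 ^ (M - 1) * (‖f₁ a‖ ^ M + ‖f₂ a‖ ^ M) := add_pow_le (norm_nonneg _) (norm_nonneg _) M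

end Asymptotics

/-- Nilpotent functions are closed under pointwise sum. -/
theorem nilpotent_add (x y : ℝ → ℝ) (k N : ℕ)
    (hx : oT (fun t => |x t - x 0| ^ k))
    (hy : oT (fun t => |y t - y 0| ^ N)) :
    ∃ M : ℕ, oT (fun t => |(x + y) t - (x + y) 0| ^ M) := by
  have hid : Tendsto id (𝓝[>] (0 : ℝ)) (𝓝 0) := nhdsWithin_le_nhds
  have hxM : (fun t => ‖x t - x 0‖ ^ max k N) =o[𝓝[>] 0] id :=
    (oT_iff_isLittleO.1 hx).norm_pow_of_le (le_max_left k N) hid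
  have hyM : (fun t => ‖y t - y 0‖ ^ max k N) =o[𝓝[>] 0] id :=
    (oT_iff_isLittleO.1 hy).norm_pow_of_le (le_max_right k N) hid
  refine ⟨max k N, oT_iff_isLittleO.2 ?_⟩
  simpa only [Pi.add_apply, add_sub_add_comm, Real.norm_eq_abs] using hxM.norm_add_pow hyM
end

section
/- Uniqueness of decomposition of Fermat reals: if r + Σ_{i=1}^k α_i · t^{a_i} = s + Σ_{j=1}^N β_j · t^{b_j} + o(t) as t → 0⁺, where 0 < a_1 < a_2 < … < a_k ≤ 1, 0 < b_1 < … < b_N ≤ 1, all α_i ≠ 0 and all β_j ≠ 0, then r = s, k = N, and a_i = b_i, α_i = β_i for all i. -/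
open Filter Topology Set

/-!
Collect both sides into one finitely supported coefficient function `c : ℝ →₀ ℝ`
(exponent ↦ coefficient), the constant `r - s` sitting at exponent `0`. If `c ≠ 0` and `e ≤ 1`
is its smallest exponent, then `(∑ c e' t ^ e') / t ^ e = (∑ c e' t ^ e' / t) · t ^ (1 - e)` tends
to `0`, while `∑ c e' t ^ (e' - e)` tends to `c e ≠ 0`. Hence `c = 0`: `r = s`, both sides have
the same exponents with the same coefficients, and strict monotonicity matches the indices.
-/

open Finsupp

lemma tendsto_rpow_nhdsGT_zero {p : ℝ} (hp : 0 ≤ p) :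
    Tendsto (fun t : ℝ => t ^ p) (𝓝[>] 0) (𝓝 (0 ^ p)) :=
  ((Real.continuousAt_rpow_const 0 p (Or.inr hp)).tendsto).mono_left nhdsWithin_le_nhds

lemma oT.tendsto_div_rpow {f : ℝ → ℝ} (hf : oT f) {e : ℝ} (he : e ≤ 1) :
    Tendsto (fun t => f t / t ^ e) (𝓝[>] 0) (𝓝 0) := by
  have hlim := hf.mul (tendsto_rpow_nhdsGT_zero (sub_nonneg.mpr he))
  rw [zero_mul] at hlim
  refine hlim.congr' ?_
  filter_upwards [self_mem_nhdsWithin] with t (ht : 0 < t)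
  rw [Real.rpow_sub ht, Real.rpow_one]
  field_simp

lemma tendsto_linearCombination_rpow_div_rpow (c : ℝ →₀ ℝ) {e : ℝ}
    (he : ∀ e' ∈ c.support, e ≤ e') :
    Tendsto (fun t => linearCombination ℝ (fun e' => t ^ e') c / t ^ e) (𝓝[>] 0) (𝓝 (c e)) := by
  have hlim : Tendsto (fun t : ℝ => c.sum fun e' x => x * t ^ (e' - e)) (𝓝[>] 0)
      (𝓝 (c.sum fun e' x => x * 0 ^ (e' - e))) :=
    tendsto_finsetSum _ fun e' he' =>
      (tendsto_rpow_nhdsGT_zero (sub_nonneg.mpr (he e' he'))).const_mul _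
  have hval : (c.sum fun e' x => x * (0 : ℝ) ^ (e' - e)) = c e := by
    rw [← c.sum_ite_self_eq e]
    refine Finset.sum_congr rfl fun e' _ => ?_
    rcases eq_or_ne e e' with rfl | hne
    · simp
    · simp [hne, Real.zero_rpow (sub_ne_zero.mpr hne.symm)]
  rw [hval] at hlim
  refine hlim.congr' ?_
  filter_upwards [self_mem_nhdsWithin] with t (ht : 0 < t)
  rw [linearCombination_apply, Finsupp.sum, Finsupp.sum, Finset.sum_div]
  refine Finset.sum_congr rfl fun e' _ => ?_
  rw [Real.rpow_sub ht, smul_eq_mul, mul_div_assoc]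

lemma Finsupp.eq_zero_of_oT_linearCombination_rpow (c : ℝ →₀ ℝ) (hc : ∀ e, 1 < e → c e = 0)
    (h : oT fun t => linearCombination ℝ (fun e => t ^ e) c) : c = 0 := by
  by_contra hne
  have hsupp : c.support.Nonempty := Finsupp.support_nonempty_iff.mpr hne
  set e := c.support.min' hsupp
  have he : e ∈ c.support := c.support.min'_mem hsupp
  have he1 : e ≤ 1 := not_lt.mp fun h1 => Finsupp.mem_support_iff.mp he (hc e h1)
  have hce : c e = 0 := tendsto_nhds_unique
    (tendsto_linearCombination_rpow_div_rpow c fun e' => c.support.min'_le e')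
    (h.tendsto_div_rpow he1)
  exact Finsupp.mem_support_iff.mp he hce

lemma Fin.exists_cast_eq_of_strictMono_of_range_eq {α : Type*} [Preorder α] {k N : ℕ}
    {a : Fin k → α} {b : Fin N → α} (ha : StrictMono a) (hb : StrictMono b)
    (hab : range a = range b) : ∃ e : k = N, ∀ i, a i = b (Fin.cast e i) := by
  classical
  have hkN : N = k := by
    simpa [hab, Set.card_range_of_injective hb.injective] using
      Set.card_range_of_injective ha.injective
  subst hkN
  exact ⟨rfl, fun i => by rw [(ha.range_inj hb).mp hab]; rfl⟩

section SumSingle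

variable {ι κ M : Type*} [Fintype ι] [AddCommMonoid M] {a : ι → κ}

lemma sum_single_apply_of_injective (ha : Function.Injective a) (α : ι → M) (i : ι) :
    (∑ j, single (a j) (α j)) (a i) = α i := by
  classical
  simp [Finsupp.finsetSum_apply, single_apply, ha.eq_iff]

lemma sum_single_apply_of_notMem_range (α : ι → M) {x : κ} (hx : x ∉ range a) :
    (∑ j, single (a j) (α j)) x = 0 := by
  classical
  refine (Finsupp.finsetSum_apply _ _ _).trans (Finset.sum_eq_zero fun j _ => ?_)
  exact single_eq_of_ne fun h => hx ⟨j, h.symm⟩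

lemma sum_single_apply_ne_zero_iff (ha : Function.Injective a) {α : ι → M} (hα : ∀ i, α i ≠ 0)
    (x : κ) : (∑ j, single (a j) (α j)) x ≠ 0 ↔ x ∈ range a := by
  refine ⟨not_imp_comm.mp (sum_single_apply_of_notMem_range α), ?_⟩
  rintro ⟨i, rfl⟩
  rw [sum_single_apply_of_injective ha]
  exact hα i

end SumSingle

/-- Uniqueness of the decomposition of a Fermat real. -/
theorem decomposition_unique (k N : ℕ) (r s : ℝ)
    (α a : Fin k → ℝ) (β b : Fin N → ℝ)
    (ha : StrictMono a) (ha0 : ∀ i, 0 < a i) (ha1 : ∀ i, a i ≤ 1)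
    (hα : ∀ i, α i ≠ 0)
    (hb : StrictMono b) (hb0 : ∀ j, 0 < b j) (hb1 : ∀ j, b j ≤ 1)
    (hβ : ∀ j, β j ≠ 0)
    (h : oT (fun t => (r + ∑ i, α i * t ^ (a i)) - (s + ∑ j, β j * t ^ (b j)))) :
    r = s ∧ ∃ e : k = N, ∀ i : Fin k,
      a i = b (Fin.cast e i) ∧ α i = β (Fin.cast e i) := by
  set A : ℝ →₀ ℝ := ∑ i, single (a i) (α i)
  set B : ℝ →₀ ℝ := ∑ j, single (b j) (β j)
  have hA : ∀ x ∉ Ioc 0 1, A x = 0 := fun x hx =>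
    sum_single_apply_of_notMem_range α fun ⟨i, hi⟩ => hx (hi ▸ ⟨ha0 i, ha1 i⟩)
  have hB : ∀ x ∉ Ioc 0 1, B x = 0 := fun x hx =>
    sum_single_apply_of_notMem_range β fun ⟨j, hj⟩ => hx (hj ▸ ⟨hb0 j, hb1 j⟩)
  have hc : single 0 (r - s) + A - B = 0 := by
    refine Finsupp.eq_zero_of_oT_linearCombination_rpow _ (fun e he => ?_) ?_
    · have he' : e ∉ Ioc 0 1 := fun h => he.not_ge h.2
      simp [hA e he', hB e he', single_eq_of_ne (by linarith : e ≠ 0)]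
    · convert h using 2 with t
      simp only [A, B, map_add, map_sub, map_sum, linearCombination_single, smul_eq_mul,
        Real.rpow_zero]
      ring
  have hrs : r = s := by
    have h0 : (0 : ℝ) ∉ Ioc 0 1 := by simp
    simpa [hA 0 h0, hB 0 h0, sub_eq_zero] using congrArg (· 0) hc
  subst hrs
  have hAB : A = B := by simpa [sub_eq_zero] using hc
  have hsuppA : ∀ x, A x ≠ 0 ↔ x ∈ range a := sum_single_apply_ne_zero_iff ha.injective hα
  have hsuppB : ∀ x, B x ≠ 0 ↔ x ∈ range b := sum_single_apply_ne_zero_iff hb.injective hβ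
  obtain ⟨e, hab⟩ := Fin.exists_cast_eq_of_strictMono_of_range_eq ha hb <| by
    ext x
    rw [← hsuppA, ← hsuppB, hAB]
  have hαA : ∀ i, A (a i) = α i := sum_single_apply_of_injective ha.injective α
  have hβB : ∀ j, B (b j) = β j := sum_single_apply_of_injective hb.injective β
  exact ⟨rfl, e, fun i => ⟨hab i, by rw [← hαA, hAB, hab i, hβB]⟩⟩
end

section
/- Product of powers criterion: let h_1, …, h_n be nonzero infinitesimal Fermat reals with orders ω(h_1), …, ω(h_n), and let i_1, …, i_n ∈ ℕ. Then h_1^{i_1} ⋯ h_n^{i_n} = 0 in the Fermat reals if and only if Σ_{k=1}^n i_k/ω(h_k) > 1. Concretely: if each h_k(t) = Σ_r α_{kr} t^{a_{kr}} with 0 < a_{k1} < … ≤ 1 and α_{k1} ≠ 0, and ω(h_k) = 1/a_{k1}, then Π_k h_k(t)^{i_k} = o(t) as t → 0⁺ iff Σ_k i_k · a_{k1} > 1. -/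
open Filter Topology Set

/-!
Factoring the lowest power out of each `h k` writes the product as `t ^ s * g t` with
`s = ∑ k, i k * a k 0` and `g t → ∏ k, α k 0 ^ i k ≠ 0` as `t → 0⁺`. Dividing by `t` leaves
`t ^ (s - 1) * g t`, which tends to `0` when `s > 1`; when `s ≤ 1` it dominates `|g t|` for
`t < 1`, so it cannot tend to `0`.
-/

theorem tendsto_rpow_nhds_zero_of_pos {e : ℝ} (he : 0 < e) :
    Tendsto (fun t : ℝ => t ^ e) (𝓝 0) (𝓝 0) := by
  simpa [Real.zero_rpow he.ne'] using
    (Real.continuousAt_rpow_const 0 e (Or.inr he.le)).tendsto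

theorem sum_mul_rpow_eq_rpow_mul_sum {ι : Type*} [Fintype ι] (c a : ι → ℝ) (r₀ : ι)
    {t : ℝ} (ht : 0 < t) :
    ∑ r, c r * t ^ a r = t ^ a r₀ * ∑ r, c r * t ^ (a r - a r₀) := by
  rw [Finset.mul_sum]
  refine Finset.sum_congr rfl fun r _ => ?_
  rw [mul_left_comm, ← Real.rpow_add ht, add_sub_cancel]

theorem tendsto_sum_mul_rpow_sub {ι : Type*} [Fintype ι] [DecidableEq ι] (c a : ι → ℝ)
    {r₀ : ι} (hr₀ : ∀ r, r ≠ r₀ → a r₀ < a r) :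
    Tendsto (fun t : ℝ => ∑ r, c r * t ^ (a r - a r₀)) (𝓝[>] 0) (𝓝 (c r₀)) := by
  have hterm : ∀ r, Tendsto (fun t : ℝ => c r * t ^ (a r - a r₀)) (𝓝[>] 0)
      (𝓝 (if r = r₀ then c r₀ else 0)) := by
    intro r
    rcases eq_or_ne r r₀ with rfl | hr
    · simp
    · simpa [hr] using ((tendsto_rpow_nhds_zero_of_pos (sub_pos.2 (hr₀ r hr))).const_mul
        (c r)).mono_left nhdsWithin_le_nhds
  simpa using tendsto_finsetSum Finset.univ fun r _ => hterm r

theorem prod_rpow_mul_pow {ι : Type*} [Fintype ι] (b x : ι → ℝ) (i : ι → ℕ)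
    {t : ℝ} (ht : 0 < t) :
    ∏ k, (t ^ b k * x k) ^ i k = t ^ (∑ k, (i k : ℝ) * b k) * ∏ k, x k ^ i k := by
  rw [Real.rpow_sum_of_pos ht, ← Finset.prod_mul_distrib]
  refine Finset.prod_congr rfl fun k _ => ?_
  rw [mul_pow, mul_comm (i k : ℝ), Real.rpow_mul ht.le, Real.rpow_natCast]

theorem oT_iff_one_lt_of_eq_rpow_mul {f g : ℝ → ℝ} {s C : ℝ}
    (hf : ∀ t, 0 < t → f t = t ^ s * g t) (hg : Tendsto g (𝓝[>] 0) (𝓝 C)) (hC : C ≠ 0) :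
    oT f ↔ 1 < s := by
  have hdiv : (fun t => f t / t) =ᶠ[𝓝[>] 0] fun t => t ^ (s - 1) * g t := by
    filter_upwards [self_mem_nhdsWithin] with t (ht : 0 < t)
    rw [hf t ht, Real.rpow_sub ht, Real.rpow_one]
    ring
  unfold oT
  rw [tendsto_congr' hdiv]
  constructor
  · intro h
    by_contra! hs
    have hdom : ∀ᶠ t in 𝓝[>] (0 : ℝ), ‖g t‖ ≤ ‖t ^ (s - 1) * g t‖ := by
      filter_upwards [Ioo_mem_nhdsGT (zero_lt_one' ℝ)] with t ⟨ht0, ht1⟩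
      rw [norm_mul, Real.norm_of_nonneg (Real.rpow_nonneg ht0.le _)]
      exact le_mul_of_one_le_left (norm_nonneg _)
        (Real.one_le_rpow_of_pos_of_le_one_of_nonpos ht0 ht1.le (by linarith))
    exact hC (tendsto_nhds_unique hg (squeeze_zero_norm' hdom (tendsto_norm_zero.comp h)))
  · intro hs
    simpa using (((tendsto_rpow_nhds_zero_of_pos (sub_pos.2 hs)).mono_left
      nhdsWithin_le_nhds).mul hg)

theorem prod_pow_eq_zero_iff_general (n : ℕ) (N : Fin n → ℕ) (hN : ∀ k, 0 < N k)
    (α : ∀ k : Fin n, Fin (N k) → ℝ) (a : ∀ k : Fin n, Fin (N k) → ℝ)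
    (ha : ∀ k, StrictMono (a k)) (hα : ∀ k r, α k r ≠ 0)
    (i : Fin n → ℕ) :
    oT (fun t => ∏ k, (∑ r, α k r * t ^ (a k r)) ^ (i k)) ↔
      1 < ∑ k, (i k : ℝ) * a k ⟨0, hN k⟩ := by
  set lead : ∀ k, Fin (N k) := fun k => ⟨0, hN k⟩
  have hlead : ∀ k r, r ≠ lead k → a k (lead k) < a k r := fun k r hr =>
    ha k (Fin.lt_def.2 (Nat.pos_of_ne_zero fun h => hr (Fin.ext h)))
  refine oT_iff_one_lt_of_eq_rpow_mul
    (g := fun t => ∏ k, (∑ r, α k r * t ^ (a k r - a k (lead k))) ^ i k) (fun t ht => ?_)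
    (tendsto_finsetProd _ fun k _ => (tendsto_sum_mul_rpow_sub (α k) (a k) (hlead k)).pow (i k))
    (Finset.prod_ne_zero_iff.2 fun k _ => pow_ne_zero _ (hα k (lead k)))
  refine (Finset.prod_congr rfl fun k _ => ?_).trans (prod_rpow_mul_pow _ _ _ ht)
  rw [sum_mul_rpow_eq_rpow_mul_sum _ _ (lead k) ht]

/-- Product of powers criterion: for nonzero infinitesimals
`h k = ∑ r, α k r * t ^ (a k r)` with `0 < a k 0 < ⋯ ≤ 1` and `α k r ≠ 0`
(so `ω (h k) = 1 / a k 0`), the product `∏ k, (h k) ^ (i k)` is zero in the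
Fermat reals iff `∑ k, i k / ω (h k) = ∑ k, i k * a k 0 > 1`. -/
theorem prod_pow_eq_zero_iff (n : ℕ) (N : Fin n → ℕ) (hN : ∀ k, 0 < N k)
    (α : ∀ k : Fin n, Fin (N k) → ℝ) (a : ∀ k : Fin n, Fin (N k) → ℝ)
    (ha : ∀ k, StrictMono (a k)) (ha0 : ∀ k r, 0 < a k r)
    (ha1 : ∀ k r, a k r ≤ 1) (hα : ∀ k r, α k r ≠ 0)
    (i : Fin n → ℕ) :
    oT (fun t => ∏ k, (∑ r, α k r * t ^ (a k r)) ^ (i k)) ↔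
      1 < ∑ k, (i k : ℝ) * a k ⟨0, hN k⟩ :=
  prod_pow_eq_zero_iff_general n N hN α a ha hα i
end

section
/- Order of a nonzero product: if x and y are nonzero infinitesimal Fermat reals with x·y ≠ 0, then 1/ω(x·y) = 1/ω(x) + 1/ω(y). Concretely, if x(t) = α t^a + o(t^a) and y(t) = β t^b + o(t^b) with α, β ≠ 0, 0 < a, b ≤ 1 and a + b ≤ 1, then the smallest exponent in the decomposition of x·y is a + b. -/
open Filter Topology Set

/-- With `f = α u (1 + δ)` and `g = β v (1 + ε)`, the relative error of `f g` against `α β u v`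
is `α ε + β δ + δ ε`. -/
theorem tendsto_mul_sub_div_mul {ι 𝕜 : Type*} [NormedField 𝕜] {l : Filter ι}
    {f g u v : ι → 𝕜} {α β : 𝕜} (hu : ∀ᶠ i in l, u i ≠ 0) (hv : ∀ᶠ i in l, v i ≠ 0)
    (hf : Tendsto (fun i => (f i - α * u i) / u i) l (𝓝 0))
    (hg : Tendsto (fun i => (g i - β * v i) / v i) l (𝓝 0)) :
    Tendsto (fun i => (f i * g i - α * β * (u i * v i)) / (u i * v i)) l (𝓝 0) := by
  have h := ((hg.const_mul α).add (hf.const_mul β)).add (hf.mul hg)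
  simp only [mul_zero, add_zero] at h
  refine h.congr' ?_
  filter_upwards [hu, hv] with i hui hvi
  field_simp
  ring

theorem order_mul_general (x y : ℝ → ℝ) (α β a b : ℝ)
    (hx : Filter.Tendsto (fun t => (x t - α * t ^ a) / t ^ a)
      (nhdsWithin 0 (Set.Ioi 0)) (nhds 0))
    (hy : Filter.Tendsto (fun t => (y t - β * t ^ b) / t ^ b)
      (nhdsWithin 0 (Set.Ioi 0)) (nhds 0)) :
    Filter.Tendsto (fun t => (x t * y t - α * β * t ^ (a + b)) / t ^ (a + b))
      (nhdsWithin 0 (Set.Ioi 0)) (nhds 0) := by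
  have hpos : ∀ᶠ t in 𝓝[>] (0 : ℝ), 0 < t := self_mem_nhdsWithin
  have hpow_ne (c : ℝ) : ∀ᶠ t in 𝓝[>] (0 : ℝ), t ^ c ≠ 0 :=
    hpos.mono fun t ht => (Real.rpow_pos_of_pos ht c).ne'
  refine (tendsto_mul_sub_div_mul (hpow_ne a) (hpow_ne b) hx hy).congr' ?_
  filter_upwards [hpos] with t ht
  rw [Real.rpow_add ht]

/-- Order of a nonzero product: if `x t = α * t ^ a + o(t ^ a)` and
`y t = β * t ^ b + o(t ^ b)` with `α, β ≠ 0`, `0 < a, b ≤ 1`, `a + b ≤ 1`,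
then `x * y` has leading term `α * β * t ^ (a + b)`, i.e. the smallest exponent
in the decomposition of `x * y` is `a + b` (so `1/ω(x·y) = 1/ω(x) + 1/ω(y)`). -/
theorem order_mul (x y : ℝ → ℝ) (α β a b : ℝ)
    (hα : α ≠ 0) (hβ : β ≠ 0)
    (ha0 : 0 < a) (ha1 : a ≤ 1) (hb0 : 0 < b) (hb1 : b ≤ 1) (hab : a + b ≤ 1)
    (hx : Filter.Tendsto (fun t => (x t - α * t ^ a) / t ^ a)
      (nhdsWithin 0 (Set.Ioi 0)) (nhds 0))
    (hy : Filter.Tendsto (fun t => (y t - β * t ^ b) / t ^ b)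
      (nhdsWithin 0 (Set.Ioi 0)) (nhds 0)) :
    Filter.Tendsto (fun t => (x t * y t - α * β * t ^ (a + b)) / t ^ (a + b))
      (nhdsWithin 0 (Set.Ioi 0)) (nhds 0) :=
  order_mul_general x y α β a b hx hy
end

section
/- Order of a nonzero sum: if x and y are nonzero infinitesimal Fermat reals with x + y ≠ 0, then ω(x+y) ≤ max(ω(x), ω(y)), with equality whenever the leading terms do not cancel; in particular if ω(x) ≠ ω(y), then ω(x+y) = max(ω(x), ω(y)). -/
open Filter Topology Set

/-!
`Leading f δ d` says `f t / t ^ d → δ` as `t → 0⁺`. Hence the coefficient at a given exponent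
is unique, and an expansion at exponent `d` gives coefficient `0` at every smaller exponent.
So `x + y` has an expansion at exponent `min a b`, with coefficient `α`, `β` or `α + β`; its
coefficient at any smaller exponent is `0 ≠ γ`, whence `min a b ≤ c`, and when the coefficient
at `min a b` is nonzero the same argument run the other way gives `c ≤ min a b`.
-/

/-- `x` has leading term `α * t ^ a` as `t → 0⁺`. -/
def Leading (x : ℝ → ℝ) (α a : ℝ) : Prop :=
  Filter.Tendsto (fun t => (x t - α * t ^ a) / t ^ a)
    (nhdsWithin 0 (Set.Ioi 0)) (nhds 0)

namespace Leading

variable {f g : ℝ → ℝ} {δ ε d e : ℝ}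

theorem iff_tendsto_div_rpow :
    Leading f δ d ↔ Tendsto (fun t => f t / t ^ d) (𝓝[>] 0) (𝓝 δ) := by
  have hcongr : ∀ᶠ t in 𝓝[>] (0 : ℝ), (f t - δ * t ^ d) / t ^ d = f t / t ^ d - δ := by
    filter_upwards [self_mem_nhdsWithin] with t ht
    have : t ^ d ≠ 0 := (Real.rpow_pos_of_pos ht d).ne'
    field_simp
  rw [Leading, tendsto_congr' hcongr, tendsto_sub_nhds_zero_iff]

theorem coeff_unique (hδ : Leading f δ d) (hε : Leading f ε d) : δ = ε :=
  tendsto_nhds_unique (iff_tendsto_div_rpow.mp hδ) (iff_tendsto_div_rpow.mp hε)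

theorem add (hf : Leading f δ d) (hg : Leading g ε d) : Leading (f + g) (δ + ε) d :=
  (add_zero (0 : ℝ) ▸ Tendsto.add hf hg).congr fun t => by simp only [Pi.add_apply]; ring

/-- `Leading f 0 e` says `f = o(t ^ e)`. -/
theorem zero_of_lt (hf : Leading f δ d) (hed : e < d) : Leading f 0 e := by
  have hpow : Tendsto (fun t : ℝ => t ^ (d - e)) (𝓝[>] 0) (𝓝 0) :=
    ((Real.continuous_rpow_const (sub_pos.mpr hed).le).tendsto' 0 0
      (Real.zero_rpow (sub_pos.mpr hed).ne')).mono_left nhdsWithin_le_nhds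
  rw [iff_tendsto_div_rpow] at hf ⊢
  refine (mul_zero δ ▸ hf.mul hpow).congr' ?_
  filter_upwards [self_mem_nhdsWithin] with t ht
  have hsplit : t ^ d = t ^ e * t ^ (d - e) := by rw [← Real.rpow_add ht, add_sub_cancel]
  have : t ^ (d - e) ≠ 0 := (Real.rpow_pos_of_pos ht _).ne'
  rw [hsplit]
  field_simp

theorem add_of_lt (hf : Leading f δ d) (hg : Leading g ε e) (hde : d < e) :
    Leading (f + g) δ d := by
  simpa using hf.add (hg.zero_of_lt hde)

theorem le_of_ne_zero (hδ : Leading f δ d) (hε : Leading f ε e) (hε0 : ε ≠ 0) : d ≤ e := by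
  by_contra! hed
  exact hε0 (hε.coeff_unique (hδ.zero_of_lt hed))

theorem exponent_unique (hδ : Leading f δ d) (hδ0 : δ ≠ 0) (hε : Leading f ε e) (hε0 : ε ≠ 0) :
    d = e :=
  le_antisymm (hδ.le_of_ne_zero hε hε0) (hε.le_of_ne_zero hδ hδ0)

end Leading

theorem order_add_general (x y : ℝ → ℝ) (α β γ a b c : ℝ)
    (hα : α ≠ 0) (hβ : β ≠ 0) (hγ : γ ≠ 0)
    (hx : Leading x α a) (hy : Leading y β b) (hxy : Leading (x + y) γ c) :
    min a b ≤ c ∧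
    (¬(a = b ∧ α + β = 0) → c = min a b) ∧
    (a ≠ b → c = min a b) := by
  rcases lt_trichotomy a b with hab | rfl | hab
  · rw [min_eq_left hab.le]
    have hca : c = a := hxy.exponent_unique hγ (hx.add_of_lt hy hab) hα
    exact ⟨hca.ge, fun _ => hca, fun _ => hca⟩
  · have hsum : Leading (x + y) (α + β) a := hx.add hy
    rw [min_self]
    exact ⟨hsum.le_of_ne_zero hxy hγ,
      fun hcancel => hxy.exponent_unique hγ hsum fun h => hcancel ⟨rfl, h⟩,
      fun hne => absurd rfl hne⟩
  · have hsum : Leading (x + y) β b := add_comm y x ▸ hy.add_of_lt hx hab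
    rw [min_eq_right hab.le]
    have hcb : c = b := hxy.exponent_unique hγ hsum hβ
    exact ⟨hcb.ge, fun _ => hcb, fun _ => hcb⟩

/-- Order of a nonzero sum: if `x`, `y` are nonzero infinitesimals with leading
terms `α * t ^ a`, `β * t ^ b` (orders `ω x = 1/a`, `ω y = 1/b`) and `x + y`
is nonzero with leading term `γ * t ^ c` (order `ω (x+y) = 1/c`), then
`ω (x+y) ≤ max (ω x) (ω y)`, i.e. `min a b ≤ c`; equality holds whenever the
leading terms do not cancel, in particular whenever `a ≠ b`. -/
theorem order_add (x y : ℝ → ℝ) (α β γ a b c : ℝ)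
    (hα : α ≠ 0) (hβ : β ≠ 0) (hγ : γ ≠ 0)
    (ha0 : 0 < a) (ha1 : a ≤ 1) (hb0 : 0 < b) (hb1 : b ≤ 1)
    (hc0 : 0 < c) (hc1 : c ≤ 1)
    (hx : Leading x α a) (hy : Leading y β b) (hxy : Leading (x + y) γ c) :
    min a b ≤ c ∧
    (¬(a = b ∧ α + β = 0) → c = min a b) ∧
    (a ≠ b → c = min a b) :=
  order_add_general x y α β γ a b c hα hβ hγ hx hy hxy
end

section
/- For natural a, the set D_a = {x infinitesimal Fermat real : ω(x) < a+1} coincides with {x : x^{a+1} = 0}, i.e., an infinitesimal x satisfies x(t)^{a+1} = o(t) as t → 0⁺ if and only if the smallest exponent a₁ in its decomposition satisfies a₁ > 1/(a+1). -/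
open Filter Topology Set

/-!
For `t > 0` write `x t = t ^ a₀ * G t` with `G t = x t / t ^ a₀`. Because `a₀` is the unique
smallest exponent and `w = o(t)`, `G t → α₀ ≠ 0`. Hence `x t ^ k / t = G t ^ k * t ^ (k a₀ - 1)`
with `G t ^ k → α₀ ^ k ≠ 0`, and this tends to `0` exactly when the exponent `k a₀ - 1` is
positive.
-/

lemma tendsto_rpow_const_nhdsGT_zero {c : ℝ} (hc : 0 ≤ c) :
    Tendsto (fun t : ℝ => t ^ c) (𝓝[>] 0) (𝓝 ((0 : ℝ) ^ c)) :=
  (Real.continuousAt_rpow_const 0 c (Or.inr hc)).tendsto.mono_left nhdsWithin_le_nhds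

lemma tendsto_mul_rpow_nhdsGT_zero_iff {f : ℝ → ℝ} {c e : ℝ}
    (hf : Tendsto f (𝓝[>] 0) (𝓝 c)) (hc : c ≠ 0) :
    Tendsto (fun t => f t * t ^ e) (𝓝[>] 0) (𝓝 0) ↔ 0 < e := by
  constructor
  · intro h
    by_contra! he
    have hsmall : ∀ᶠ t in 𝓝[>] (0 : ℝ), t ∈ Ioc (0 : ℝ) 1 :=
      Ioc_mem_nhdsGT zero_lt_one
    have hle : ∀ᶠ t in 𝓝[>] (0 : ℝ), |f t| ≤ |f t * t ^ e| := by
      filter_upwards [hsmall] with t ⟨ht0, ht1⟩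
      rw [abs_mul]
      exact le_mul_of_one_le_right (abs_nonneg _)
        ((Real.one_le_rpow_of_pos_of_le_one_of_nonpos ht0 ht1 he).trans (le_abs_self _))
    have := le_of_tendsto_of_tendsto hf.abs h.abs hle
    simp only [abs_zero, abs_nonpos_iff] at this
    exact hc this
  · intro he
    simpa [Real.zero_rpow he.ne'] using hf.mul (tendsto_rpow_const_nhdsGT_zero he.le)

lemma tendsto_div_rpow_min_exponent {ι : Type*} [Fintype ι] {α a : ι → ℝ} {w : ℝ → ℝ} {i₀ : ι}
    (hmin : ∀ i ≠ i₀, a i₀ < a i) (ha₀ : a i₀ ≤ 1) (hw : oT w) :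
    Tendsto (fun t => (∑ i, α i * t ^ a i + w t) / t ^ a i₀) (𝓝[>] 0) (𝓝 (α i₀)) := by
  have hle : ∀ i, a i₀ ≤ a i := fun i =>
    (eq_or_ne i i₀).elim (fun h => h ▸ le_rfl) fun h => (hmin i h).le
  have hsum : Tendsto (fun t : ℝ => ∑ i, α i * t ^ (a i - a i₀)) (𝓝[>] 0) (𝓝 (α i₀)) := by
    have hlim : ∑ i, α i * (0 : ℝ) ^ (a i - a i₀) = α i₀ := by
      rw [Fintype.sum_eq_single i₀ fun i hi => by rw [Real.zero_rpow (sub_pos.2 (hmin i hi)).ne',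
        mul_zero]]
      simp
    rw [← hlim]
    exact tendsto_finsetSum _ fun i _ =>
      (tendsto_rpow_const_nhdsGT_zero (sub_nonneg.2 (hle i))).const_mul _
  have hrem : Tendsto (fun t : ℝ => w t / t * t ^ (1 - a i₀)) (𝓝[>] 0) (𝓝 0) := by
    simpa using hw.mul (tendsto_rpow_const_nhdsGT_zero (sub_nonneg.2 ha₀))
  refine (by simpa using hsum.add hrem : Tendsto _ _ (𝓝 (α i₀))).congr' ?_
  filter_upwards [self_mem_nhdsWithin] with t (ht : 0 < t)
  simp only [Real.rpow_sub ht, Real.rpow_one, add_div, Finset.sum_div, mul_div_assoc]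
  field_simp

lemma pow_div_eq_div_rpow_pow_mul_rpow {x t b : ℝ} (ht : 0 < t) (k : ℕ) :
    x ^ k / t = (x / t ^ b) ^ k * t ^ (k * b - 1) := by
  rw [div_pow, Real.rpow_sub ht, Real.rpow_one, mul_comm (k : ℝ), Real.rpow_mul ht.le,
    Real.rpow_natCast]
  have : 0 < (t ^ b) ^ k := pow_pos (Real.rpow_pos_of_pos ht b) k
  field_simp

theorem mem_D_iff_pow_eq_zero_general (m : ℕ) (n : ℕ) (hn : 0 < n)
    (α a : Fin n → ℝ) (w : ℝ → ℝ)
    (ha : StrictMono a) (ha1 : ∀ i, a i ≤ 1)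
    (hα : ∀ i, α i ≠ 0) (hw : oT w) :
    oT (fun t => (∑ i, α i * t ^ (a i) + w t) ^ (m + 1)) ↔
      1 / ((m : ℝ) + 1) < a ⟨0, hn⟩ := by
  set i₀ : Fin n := ⟨0, hn⟩
  have hmin : ∀ i ≠ i₀, a i₀ < a i := fun i hi =>
    ha (Fin.lt_def.2 (Nat.pos_of_ne_zero fun h => hi (Fin.ext h)))
  have hG := (tendsto_div_rpow_min_exponent (α := α) hmin (ha1 i₀) hw).pow (m + 1)
  have hfactor : (fun t => (∑ i, α i * t ^ a i + w t) ^ (m + 1) / t) =ᶠ[𝓝[>] 0]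
      fun t => ((∑ i, α i * t ^ a i + w t) / t ^ a i₀) ^ (m + 1) * t ^ ((m + 1 : ℕ) * a i₀ - 1) :=
    eventually_mem_nhdsWithin.mono fun t ht => pow_div_eq_div_rpow_pow_mul_rpow ht (m + 1)
  rw [oT, tendsto_congr' hfactor, tendsto_mul_rpow_nhdsGT_zero_iff hG (pow_ne_zero _ (hα i₀)),
    div_lt_iff₀ (by positivity)]
  push_cast
  constructor <;> intro <;> linarith

/-- For natural `m`, the ideal `D_m = {x : ω(x) < m + 1}` coincides with
`{x : x ^ (m+1) = 0}`: an infinitesimal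
`x t = ∑ i, α i * t ^ (a i) + w t` (decomposition: `0 < a 0 < ⋯ ≤ 1`,
`α i ≠ 0`, `w = o(t)`) satisfies `x ^ (m+1) = o(t)` as `t → 0⁺` iff its
smallest exponent satisfies `a 0 > 1 / (m+1)` (i.e. `ω(x) = 1/(a 0) < m+1`). -/
theorem mem_D_iff_pow_eq_zero (m : ℕ) (n : ℕ) (hn : 0 < n)
    (α a : Fin n → ℝ) (w : ℝ → ℝ)
    (ha : StrictMono a) (ha0 : ∀ i, 0 < a i) (ha1 : ∀ i, a i ≤ 1)
    (hα : ∀ i, α i ≠ 0) (hw : oT w) (hw0 : w 0 = 0) :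
    oT (fun t => (∑ i, α i * t ^ (a i) + w t) ^ (m + 1)) ↔
      1 / ((m : ℝ) + 1) < a ⟨0, hn⟩ :=
  mem_D_iff_pow_eq_zero_general m n hn α a w ha ha1 hα hw
end

section
/- First cancellation law: if x is a nonzero Fermat real (i.e., a little-oh polynomial with lim_{t→0⁺} x(t)/t ≠ 0 or not existing as 0) and r, s ∈ ℝ satisfy x·r = x·s in the Fermat reals (i.e., lim_{t→0⁺} x(t)(r-s)/t = 0), then r = s. -/
open Filter Topology Set

/-- `x` is a little-oh polynomial. -/
def IsLittleOhPoly (x : ℝ → ℝ) : Prop :=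
  ∃ (k : ℕ) (r : ℝ) (α a : Fin k → ℝ) (w : ℝ → ℝ),
    (∀ i, 0 ≤ a i) ∧ w 0 = 0 ∧ oT w ∧
    ∀ t : ℝ, 0 ≤ t → x t = r + (∑ i, α i * t ^ (a i)) + w t

/-- Equality in the Fermat reals. -/
def FermatEq (x y : ℝ → ℝ) : Prop :=
  oT (fun t => x t - y t) ∧ x 0 = y 0

theorem oT_mul_const_iff {f : ℝ → ℝ} {c : ℝ} (hc : c ≠ 0) :
    oT (fun t => f t * c) ↔ oT f := by
  have key := tendsto_const_smul_iff₀ (f := fun t => f t / t)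
    (l := 𝓝[>] (0 : ℝ)) (a := 0) hc
  simp only [smul_eq_mul, mul_zero] at key
  unfold oT
  rw [← key]
  simp only [mul_div_assoc', mul_comm]

theorem fermatEq_mul_const_iff {x : ℝ → ℝ} {r s : ℝ} :
    FermatEq (fun t => x t * r) (fun t => x t * s) ↔ r = s ∨ FermatEq x 0 := by
  rcases eq_or_ne r s with rfl | hrs
  · simp [FermatEq, oT]
  have hrs' : r - s ≠ 0 := sub_ne_zero.mpr hrs
  simp only [FermatEq, ← mul_sub, hrs, false_or, Pi.zero_apply, sub_zero, oT_mul_const_iff hrs',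
    mul_eq_mul_left_iff]

theorem cancellation_law_general (x : ℝ → ℝ)
    (hx0 : ¬ FermatEq x 0) (r s : ℝ)
    (h : FermatEq (fun t => x t * r) (fun t => x t * s)) : r = s :=
  (fermatEq_mul_const_iff.mp h).resolve_right hx0

/-- First cancellation law: if `x ≠ 0` in the Fermat reals and
`x * r = x * s` in the Fermat reals for standard reals `r`, `s`, then `r = s`. -/
theorem cancellation_law (x : ℝ → ℝ) (hx : IsLittleOhPoly x)
    (hx0 : ¬ FermatEq x 0) (r s : ℝ)
    (h : FermatEq (fun t => x t * r) (fun t => x t * s)) : r = s :=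
  cancellation_law_general x hx0 r s h
end

section
/- Incompatibility of total order with nontrivial square-zero products: let R be a (commutative) ordered ring and D ⊆ R a subset such that 0 ∈ D, every h ∈ D satisfies h² = 0 and −h ∈ D, and the order restricted to D is total. Then h·k = 0 for all h, k ∈ D. -/
/-! Each element of `D` is comparable with `0`, so up to sign both factors are nonnegative.
For comparable nonnegative square-zero `a ≤ b` we get `0 = a² ≤ ab ≤ b² = 0`. -/

theorem mul_eq_zero_of_nonneg_of_sq_eq_zero {R : Type*} [Semiring R] [PartialOrder R]
    [IsOrderedRing R] {a b : R} (ha : 0 ≤ a) (hb : 0 ≤ b) (ha2 : a ^ 2 = 0) (hb2 : b ^ 2 = 0)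
    (hab : a ≤ b ∨ b ≤ a) : a * b = 0 := by
  rw [sq] at ha2 hb2
  rcases hab with hab | hba
  · exact le_antisymm (hb2 ▸ mul_le_mul_of_nonneg_right hab hb)
      (ha2 ▸ mul_le_mul_of_nonneg_left hab ha)
  · exact le_antisymm (ha2 ▸ mul_le_mul_of_nonneg_left hba ha)
      (hb2 ▸ mul_le_mul_of_nonneg_right hba hb)

/-- In a commutative ordered ring `R`, if `D ⊆ R` contains `0`, is closed under
negation, consists of square-zero elements, and is totally ordered by the
order of `R`, then the product of any two elements of `D` is zero. -/
theorem total_order_implies_product_zero (R : Type*) [CommRing R] [PartialOrder R] [IsOrderedRing R]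
    (D : Set R) (h0 : (0 : R) ∈ D)
    (hsq : ∀ h ∈ D, h ^ 2 = 0) (hneg : ∀ h ∈ D, -h ∈ D)
    (htot : ∀ h ∈ D, ∀ k ∈ D, h ≤ k ∨ k ≤ h) :
    ∀ h ∈ D, ∀ k ∈ D, h * k = 0 := by
  have of_nonneg : ∀ h ∈ D, ∀ k ∈ D, 0 ≤ h → 0 ≤ k → h * k = 0 := fun h hD k kD hh hk =>
    mul_eq_zero_of_nonneg_of_sq_eq_zero hh hk (hsq h hD) (hsq k kD) (htot h hD k kD)
  have of_nonneg_right : ∀ h ∈ D, ∀ k ∈ D, 0 ≤ k → h * k = 0 := by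
    intro h hD k kD hk
    rcases htot h hD 0 h0 with hh | hh
    · simpa using of_nonneg (-h) (hneg h hD) k kD (neg_nonneg.mpr hh) hk
    · exact of_nonneg h hD k kD hh hk
  intro h hD k kD
  rcases htot k kD 0 h0 with hk | hk
  · simpa using of_nonneg_right h hD (-k) (hneg k kD) (neg_nonneg.mpr hk)
  · exact of_nonneg_right h hD k kD hk
end
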